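/- arXiv:2410.00893 — 6 statements merged into one kernel-verified Lean document; each statement's English description precedes it below -/
import Mathlib

section
/- Let n, m be natural numbers and let T₁, T₁', T₂, T₂' be subsets of Fin n, each of cardinality m. Then there exists a permutation π of Fin n with π(T₁) = T₂ and π(T₁') = T₂' if and only if |T₁ \ T₁'| = |T₂ \ T₂'|. -/
/-!
A permutation carries the pair `(A, B)` to `(C, D)` exactly when it carries each of the four
Venn regions `A ∩ B`, `A \ B`, `B \ A`, `(A ∪ B)ᶜ` onto the corresponding region of `(C, D)`.
Such a permutation exists iff corresponding regions have equal size, and those sizes are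
determined by `n`, `|A|`, `|B|` and `|A \ B|`.
-/

open Finset

theorem Equiv.Perm.exists_apply_comp_eq_of_card_fiber_eq {α β : Type*} [Fintype α]
    [DecidableEq β] {f g : α → β} (h : ∀ b, #{x | f x = b} = #{x | g x = b}) :
    ∃ σ : Equiv.Perm α, ∀ x, g (σ x) = f x :=
  ⟨Equiv.ofFiberEquiv fun b => Fintype.equivOfCardEq (by simpa [Fintype.card_subtype] using h b),
    Equiv.ofFiberEquiv_map _⟩

lemma Finset.image_perm_eq_of_forall_mem_iff {α : Type*} [DecidableEq α] {A C : Finset α}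
    {π : Equiv.Perm α} (h : ∀ x, π x ∈ C ↔ x ∈ A) : A.image π = C := by
  ext y
  obtain ⟨x, rfl⟩ := π.surjective y
  rw [π.injective.mem_finset_image, h]

section VennRegions

variable {α : Type*} [Fintype α] [DecidableEq α]

lemma Finset.card_fiber_mem_pair_eq_of_card_sdiff_eq {A B C D : Finset α} (hAC : #A = #C)
    (hBD : #B = #D) (h : #(A \ B) = #(C \ D)) (p q : Bool) :
    #{x | (decide (x ∈ A), decide (x ∈ B)) = (p, q)} =
      #{x | (decide (x ∈ C), decide (x ∈ D)) = (p, q)} := by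
  have hinter : #(A ∩ B) = #(C ∩ D) := by
    have := card_sdiff_add_card_inter A B
    have := card_sdiff_add_card_inter C D
    omega
  have hsdiff : #(B \ A) = #(D \ C) := by
    have hB := card_sdiff_add_card_inter B A
    have hD := card_sdiff_add_card_inter D C
    rw [inter_comm] at hB hD
    omega
  have hunion : #(A ∪ B) = #(C ∪ D) := by
    have := card_union_add_card_inter A B
    have := card_union_add_card_inter C D
    omega
  cases p <;> cases q <;>
    simp only [Prod.ext_iff, Bool.decide_iff, decide_eq_false_iff_not, filter_and, filter_not,
      filter_univ_mem, ← compl_eq_univ_sdiff]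
  · rw [← compl_union, ← compl_union, card_compl, card_compl, hunion]
  · rw [inter_comm, inter_comm Cᶜ, ← sdiff_eq_inter_compl, ← sdiff_eq_inter_compl, hsdiff]
  · rw [← sdiff_eq_inter_compl, ← sdiff_eq_inter_compl, h]
  · exact hinter

theorem Finset.exists_perm_image_eq_and_image_eq_of_card_sdiff_eq {A B C D : Finset α}
    (hAC : #A = #C) (hBD : #B = #D) (h : #(A \ B) = #(C \ D)) :
    ∃ π : Equiv.Perm α, A.image π = C ∧ B.image π = D := by
  obtain ⟨π, hπ⟩ := Equiv.Perm.exists_apply_comp_eq_of_card_fiber_eq fun (p, q) =>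
    card_fiber_mem_pair_eq_of_card_sdiff_eq hAC hBD h p q
  refine ⟨π, image_perm_eq_of_forall_mem_iff fun x => ?_,
    image_perm_eq_of_forall_mem_iff fun x => ?_⟩
  · simpa using congrArg Prod.fst (hπ x)
  · simpa using congrArg Prod.snd (hπ x)

end VennRegions

theorem orbit_classification_of_trajectory_pairs
    (n m : ℕ) (T₁ T₁' T₂ T₂' : Finset (Fin n))
    (h₁ : T₁.card = m) (h₁' : T₁'.card = m) (h₂ : T₂.card = m) (h₂' : T₂'.card = m) :
    (∃ π : Equiv.Perm (Fin n), T₁.image π = T₂ ∧ T₁'.image π = T₂') ↔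
      (T₁ \ T₁').card = (T₂ \ T₂').card := by
  constructor
  · rintro ⟨π, rfl, rfl⟩
    rw [← image_sdiff _ _ π.injective, card_image_of_injective _ π.injective]
  · exact exists_perm_image_eq_and_image_eq_of_card_sdiff_eq (h₁.trans h₂.symm)
      (h₁'.trans h₂'.symm)
end

section
/- Fix natural numbers n, ν, μ with 1 ≤ μ and 2μ ≤ n, and for a natural number m and integer-valued index k define C(m, k) = Σ_{i=0}^{∞} binom(m, i) · binom(m, i + k) · binom(n − 2m, ν − 2i − k) (a finite sum, as all but finitely many terms vanish). Then for every k ≥ 0: μ · [(C(μ, k) − C(μ−1, k)) − (C(μ, k+2) − C(μ−1, k+2))] = k · C(μ, k) + (k+2) · C(μ, k+2) − 2(k+1) · C(μ, k+1), as an identity of integers. -/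
/-!
Over any commutative ring with an element `w`, put `Q = (1 + w x) (x + w)` and `F_m = Q ^ m`.
The coefficient of `x ^ (m + k)` in `F_m` is `S_m(k) = ∑ᵢ binom(m,i) binom(m,i+k) w^(2i+k)`,
and `C(m, k)` is the coefficient of `w ^ ν` in `(1 + w) ^ (n - 2m) S_m(k)`.
Since `Q - x (1 + w)² = w (x - 1)²` and `x Q' - Q = w (x² - 1)`, the polynomials `F_μ` satisfy
`μ (x² - 1) (F_μ - (1 + w)² x F_{μ-1}) = (x - 1)² (x F_μ' - μ F_μ)`.
Comparing coefficients of `x ^ (μ + k + 2)` gives the identity for `S`, and multiplying it by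
`(1 + w) ^ (n - 2μ)` and reading off `w ^ ν` gives the identity for `C`.
-/

/-- `C n ν m k = ∑ᵢ binom(m, i) · binom(m, i + k) · binom(n − 2m, ν − 2i − k)`,
where terms with `2i + k > ν` vanish (the last binomial has negative lower index). -/
def chebCoeff (n ν m k : ℕ) : ℕ :=
  ∑ i ∈ Finset.range (ν + 1),
    if 2 * i + k ≤ ν then
      Nat.choose m i * Nat.choose m (i + k) * Nat.choose (n - 2 * m) (ν - 2 * i - k)
    else 0

open Polynomial Finset

section

variable {R : Type*}

lemma coeff_one_add_C_mul_X_pow [CommSemiring R] (w : R) (m p : ℕ) :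
    ((1 + C w * X) ^ m).coeff p = m.choose p * w ^ p := by
  have : (1 + C w * X) ^ m = ((1 + X) ^ m).comp (C w * X) := by simp
  rw [this, comp_C_mul_X_coeff, coeff_one_add_X_pow]

lemma coeff_X_sq_sub_one_mul [Ring R] (f : R[X]) (j : ℕ) :
    ((X ^ 2 - 1) * f).coeff (j + 2) = f.coeff j - f.coeff (j + 2) := by
  rw [sub_mul, one_mul, coeff_sub, coeff_X_pow_mul]

lemma coeff_X_sub_one_sq_mul [Ring R] (f : R[X]) (j : ℕ) :
    ((X - 1) ^ 2 * f).coeff (j + 2) = f.coeff j - 2 * f.coeff (j + 1) + f.coeff (j + 2) := by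
  have : (X - 1) ^ 2 * f = X ^ 2 * f - 2 * (X * f) + f := by noncomm_ring
  rw [this, coeff_add, coeff_sub, coeff_X_pow_mul, ← C_ofNat, coeff_C_mul, coeff_X_mul]

lemma coeff_X_mul_derivative [Semiring R] (f : R[X]) (t : ℕ) :
    (X * derivative f).coeff t = t * f.coeff t := by
  cases t with
  | zero => simp
  | succ t => rw [coeff_X_mul, coeff_derivative, Nat.cast_comm, Nat.cast_succ]

noncomputable def chebSum [Semiring R] (w : R) (m k : ℕ) : R :=
  ∑ i ∈ range (m + 1), (m.choose i * m.choose (i + k) : R) * w ^ (2 * i + k)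

noncomputable def chebGen [Semiring R] (w : R) (m : ℕ) : R[X] :=
  ((1 + C w * X) * (X + C w)) ^ m

lemma coeff_chebGen [CommSemiring R] (w : R) (m k : ℕ) :
    (chebGen w m).coeff (m + k) = chebSum w m k := by
  rw [chebGen, mul_pow, add_comm X, add_pow (C w) X m, mul_sum, finsetSum_coeff, chebSum]
  refine sum_congr rfl fun i hi => ?_
  have hi : i ≤ m := Nat.lt_succ_iff.mp (mem_range.mp hi)
  rw [show (1 + C w * X) ^ m * ((C w) ^ i * X ^ (m - i) * (m.choose i : R[X]))
      = C (w ^ i * m.choose i) * (X ^ (m - i) * (1 + C w * X) ^ m) by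
        rw [C_mul, C_pow, C_eq_natCast]; ring,
    coeff_C_mul, coeff_X_pow_mul', if_pos (by omega), show m + k - (m - i) = i + k by omega,
    coeff_one_add_C_mul_X_pow]
  ring

lemma chebGen_succ_ode [CommRing R] (w : R) (m : ℕ) :
    ((m + 1 : ℕ) : R[X]) * ((X ^ 2 - 1) * (chebGen w (m + 1) - C ((1 + w) ^ 2) * X * chebGen w m))
      = (X - 1) ^ 2 * (X * derivative (chebGen w (m + 1))
          - ((m + 1 : ℕ) : R[X]) * chebGen w (m + 1)) := by
  simp only [chebGen, derivative_pow, Nat.add_sub_cancel, derivative_mul, derivative_add,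
    derivative_one, derivative_C, derivative_X, C_eq_natCast]
  simp only [C_pow, C_add, C_1]
  ring

-- `ℤ`-scalars rather than casts, so that the identity passes through `ℤ`-linear maps.
lemma chebSum_recurrence [CommRing R] (w : R) (m k : ℕ) :
    ((m + 1 : ℕ) : ℤ) • ((chebSum w (m + 1) k - (1 + w) ^ 2 * chebSum w m k)
        - (chebSum w (m + 1) (k + 2) - (1 + w) ^ 2 * chebSum w m (k + 2)))
      = (k : ℤ) • chebSum w (m + 1) k + (k + 2 : ℤ) • chebSum w (m + 1) (k + 2)
          - (2 * (k + 1) : ℤ) • chebSum w (m + 1) (k + 1) := by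
  have hX (j : ℕ) : (X * chebGen w m).coeff (m + 1 + j) = chebSum w m j := by
    rw [add_right_comm, coeff_X_mul, coeff_chebGen]
  have h := congrArg (coeff · (m + 1 + k + 2)) (chebGen_succ_ode w m)
  simp only [coeff_natCast_mul, coeff_X_sq_sub_one_mul, coeff_X_sub_one_sq_mul,
    coeff_sub, mul_assoc, coeff_C_mul] at h
  rw [show m + 1 + k + 2 = m + 1 + (k + 2) from rfl,
    show m + 1 + k + 1 = m + 1 + (k + 1) from rfl] at h
  simp only [hX, coeff_X_mul_derivative, coeff_chebGen] at h
  simp only [zsmul_eq_mul]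
  push_cast at h ⊢
  linear_combination h

end

lemma chebCoeff_eq_coeff (n ν m k : ℕ) :
    (chebCoeff n ν m k : ℤ) = ((1 + X) ^ (n - 2 * m) * chebSum (X : ℤ[X]) m k).coeff ν := by
  set g : ℕ → ℤ := fun i => ((if 2 * i + k ≤ ν then
      m.choose i * m.choose (i + k) * (n - 2 * m).choose (ν - 2 * i - k) else 0 : ℕ) : ℤ)
  have hterm (i : ℕ) : ((1 + X) ^ (n - 2 * m) *
      ((m.choose i * m.choose (i + k) : ℤ[X]) * X ^ (2 * i + k))).coeff ν = g i := by
    simp only [g]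
    rw [mul_left_comm, ← mul_assoc, coeff_mul_X_pow']
    split_ifs
    · rw [← Nat.cast_mul, coeff_natCast_mul, coeff_one_add_X_pow, Nat.sub_sub]
      push_cast
      ring
    · rw [Nat.cast_zero]
  have hν : ∀ i ≥ ν + 1, g i = 0 := fun i hi => by
    simp only [g, if_neg (show ¬2 * i + k ≤ ν by omega), Nat.cast_zero]
  have hm : ∀ i ≥ m + 1, g i = 0 := fun i hi => by
    simp [g, Nat.choose_eq_zero_of_lt (show m < i by omega)]
  rw [chebSum, mul_sum, finsetSum_coeff, chebCoeff, Nat.cast_sum]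
  simp only [hterm]
  rw [← eventually_constant_sum hν (show ν + 1 ≤ m + ν + 1 by omega),
    ← eventually_constant_sum hm (show m + 1 ≤ m + ν + 1 by omega)]

theorem chebCoeff_derivative_identity
    (n ν μ : ℕ) (hμ : 1 ≤ μ) (hn : 2 * μ ≤ n) (k : ℕ) :
    (μ : ℤ) * (((chebCoeff n ν μ k : ℤ) - chebCoeff n ν (μ - 1) k) -
        ((chebCoeff n ν μ (k + 2) : ℤ) - chebCoeff n ν (μ - 1) (k + 2))) =
      (k : ℤ) * chebCoeff n ν μ k + ((k : ℤ) + 2) * chebCoeff n ν μ (k + 2) -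
        2 * ((k : ℤ) + 1) * chebCoeff n ν μ (k + 1) := by
  obtain ⟨m, rfl⟩ : ∃ m, μ = m + 1 := ⟨μ - 1, by omega⟩
  have hpow : ((1 + X) ^ (n - 2 * m) : ℤ[X]) = (1 + X) ^ (n - 2 * (m + 1)) * (1 + X) ^ 2 := by
    rw [← pow_add]; congr 1; omega
  let L : ℤ[X] →ₗ[ℤ] ℤ := (lcoeff ℤ ν).comp (LinearMap.mulLeft ℤ ((1 + X) ^ (n - 2 * (m + 1))))
  have h := congrArg L (chebSum_recurrence (X : ℤ[X]) m k)
  simp only [map_sub, map_add, map_zsmul, smul_eq_mul, L, LinearMap.comp_apply,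
    LinearMap.mulLeft_apply, lcoeff_apply, ← mul_assoc, ← hpow, ← chebCoeff_eq_coeff] at h
  rwa [Nat.add_sub_cancel]
end

section
/- Let R be a commutative ring containing ℚ (or any field of characteristic zero), f, g ∈ R[X] polynomials, and μ a natural number. Suppose μ · (f − g) = (X − 1) · f'. Then for every natural number j, ((μ : ℤ) − j) · f⁽ʲ⁾ − μ · g⁽ʲ⁾ = (X − 1) · f⁽ʲ⁺¹⁾, where f⁽ʲ⁾ denotes the j-th iterated formal derivative. -/
namespace Polynomial

variable {R : Type*} [CommRing R]

theorem derivative_X_sub_one_mul (p : R[X]) :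
    derivative ((X - 1) * p) = p + (X - 1) * derivative p := by
  simp [derivative_mul]

theorem sub_one_smul_derivative_sub_smul_derivative {a b : ℤ} {p q : R[X]}
    (h : a • p - b • q = (X - 1) * derivative p) :
    (a - 1) • derivative p - b • derivative q = (X - 1) * derivative (derivative p) := by
  have hd := congrArg derivative h
  rw [derivative_sub, derivative_smul, derivative_smul, derivative_X_sub_one_mul] at hd
  rw [sub_smul, one_smul]
  linear_combination hd

end Polynomial

open Polynomial in
theorem iterated_derivative_relation_general
    (R : Type*) [CommRing R] (f g : R[X]) (μ : ℕ)
    (h : (μ : ℤ) • (f - g) = (X - 1) * derivative f) :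
    ∀ j : ℕ,
      ((μ : ℤ) - (j : ℤ)) • (derivative^[j] f) - (μ : ℤ) • (derivative^[j] g) =
        (X - 1) * derivative^[j + 1] f := by
  intro j
  induction j with
  | zero => simpa [smul_sub] using h
  | succ j ih =>
    simp only [Function.iterate_succ_apply'] at ih ⊢
    rw [Nat.cast_succ, ← sub_sub]
    exact sub_one_smul_derivative_sub_smul_derivative ih

open Polynomial in
theorem iterated_derivative_relation
    (R : Type*) [CommRing R] [Algebra ℚ R] (f g : R[X]) (μ : ℕ)
    (h : (μ : ℤ) • (f - g) = (X - 1) * derivative f) :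
    ∀ j : ℕ,
      ((μ : ℤ) - (j : ℤ)) • (derivative^[j] f) - (μ : ℤ) • (derivative^[j] g) =
        (X - 1) * derivative^[j + 1] f :=
  iterated_derivative_relation_general R f g μ h
end

section
/- Let K ≥ 1 be a natural number and θ ∈ [0, π] a real number. Then ((−1)^k · cos(k·θ) ≥ 0 for every natural number k ≤ K) if and only if θ ≥ (2K − 1)·π / (2K). -/
/-!
Since `(-1)^k cos (kθ) = cos (k φ)` with `φ = π - θ ∈ [0, π]`, the condition says that the
points `kφ`, `k ≤ K`, all avoid the region where cosine is negative. If `Kφ ≤ π/2` they all lie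
in `[0, π/2]`. Otherwise the first multiple `kφ` to pass `π/2` overshoots it by at most `φ`, and so
lands in `(π/2, π]`, where cosine is negative.
-/

open Real

theorem neg_one_pow_mul_cos_nat_mul (k : ℕ) (θ : ℝ) :
    (-1 : ℝ) ^ k * cos (k * θ) = cos (k * (π - θ)) := by
  rw [mul_sub, cos_nat_mul_pi_sub]

theorem exists_le_cos_nat_mul_neg {φ : ℝ} (hφ : φ ≤ π) {n : ℕ} (hn : π / 2 < n * φ) :
    ∃ k ≤ n, cos (k * φ) < 0 := by
  classical
  have hex : ∃ k : ℕ, π / 2 < k * φ := ⟨n, hn⟩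
  set k := Nat.find hex
  have hk_gt : π / 2 < k * φ := Nat.find_spec hex
  have hk_pos : k ≠ 0 := by
    rintro hk
    rw [hk, Nat.cast_zero, zero_mul] at hk_gt
    linarith [pi_pos]
  have hprev : ((k - 1 : ℕ) : ℝ) * φ ≤ π / 2 :=
    not_lt.mp (Nat.find_min hex (Nat.sub_one_lt hk_pos))
  have hk_le_pi : k * φ ≤ π := by
    rw [Nat.cast_pred (Nat.pos_of_ne_zero hk_pos)] at hprev
    rcases eq_or_ne k 1 with hk1 | hk1
    · rw [hk1, Nat.cast_one, one_mul]
      exact hφ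
    · have hk2 : (2 : ℝ) ≤ k := by exact_mod_cast (by omega : 2 ≤ k)
      nlinarith
  exact ⟨k, Nat.find_min' hex hn,
    cos_neg_of_pi_div_two_lt_of_lt hk_gt (by linarith [pi_pos])⟩

theorem forall_le_cos_nat_mul_nonneg_iff {φ : ℝ} (hφ₀ : 0 ≤ φ) (hφ : φ ≤ π)
    (K : ℕ) : (∀ k ≤ K, 0 ≤ cos (k * φ)) ↔ K * φ ≤ π / 2 := by
  constructor
  · intro h
    by_contra! hK
    obtain ⟨k, hkK, hneg⟩ := exists_le_cos_nat_mul_neg hφ hK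
    exact (h k hkK).not_gt hneg
  · intro hK k hkK
    have hkK' : (k : ℝ) * φ ≤ K * φ := by gcongr
    have hk_nonneg : 0 ≤ (k : ℝ) * φ := mul_nonneg k.cast_nonneg hφ₀
    exact cos_nonneg_of_neg_pi_div_two_le_of_le (by linarith [pi_pos]) (hkK'.trans hK)

theorem even_case_sign_criterion (K : ℕ) (hK : 1 ≤ K) (θ : ℝ)
    (h0 : 0 ≤ θ) (h1 : θ ≤ π) :
    (∀ k : ℕ, k ≤ K → 0 ≤ (-1 : ℝ) ^ k * Real.cos (k * θ)) ↔
      (2 * (K : ℝ) - 1) * π / (2 * K) ≤ θ := by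
  simp only [neg_one_pow_mul_cos_nat_mul]
  rw [forall_le_cos_nat_mul_nonneg_iff (by linarith) (by linarith),
    div_le_iff₀ (mul_pos two_pos (Nat.cast_pos.mpr hK))]
  constructor <;> intro h <;> linarith
end

section
/- Let K ≥ 1 be a natural number and θ ∈ (0, π] a real number. Then ((−1)^k · sin((2k+1)·θ/2) ≥ 0 for every natural number k ≤ K) if and only if θ ≥ 2K·π / (2K + 1). -/
/-!
Multiplying by `(-1)^k` shifts the argument of the sine by `kπ`, so the `k`-th term is
`sin (θ/2 - k (π - θ))`. These phases start at `θ/2 ∈ (0, π/2]` and decrease in steps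
`π - θ < π`; hence the first negative phase lies in `(-π, 0)`, where the sine is negative,
and all sines are nonnegative exactly when the last phase `θ/2 - K (π - θ)` is.
-/

open Real

lemma nonneg_sub_nat_mul_of_forall_sin_nonneg {a δ : ℝ} (ha : 0 ≤ a) (hδ : δ < π) :
    ∀ K : ℕ, (∀ k ≤ K, 0 ≤ sin (a - k * δ)) → 0 ≤ a - K * δ
  | 0, _ => by simpa using ha
  | K + 1, h => by
    have hprev : 0 ≤ a - K * δ :=
      nonneg_sub_nat_mul_of_forall_sin_nonneg ha hδ K fun k hk => h k (by omega)
    by_contra! hneg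
    have hsin : sin (a - (K + 1 : ℕ) * δ) < 0 :=
      sin_neg_of_neg_of_neg_pi_lt hneg (by push_cast; linarith)
    exact hsin.not_ge (h (K + 1) le_rfl)

theorem forall_sin_sub_nat_mul_nonneg_iff {a δ : ℝ} (ha₀ : 0 ≤ a) (ha : a ≤ π)
    (hδ₀ : 0 ≤ δ) (hδ : δ < π) (K : ℕ) :
    (∀ k ≤ K, 0 ≤ sin (a - k * δ)) ↔ 0 ≤ a - K * δ := by
  refine ⟨nonneg_sub_nat_mul_of_forall_sin_nonneg ha₀ hδ K, fun hK k hk => ?_⟩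
  have hkK : (k : ℝ) * δ ≤ K * δ := by gcongr
  have hk₀ : 0 ≤ (k : ℝ) * δ := by positivity
  exact sin_nonneg_of_nonneg_of_le_pi (by linarith) (by linarith)

theorem odd_case_sign_criterion_general (K : ℕ) (θ : ℝ)
    (h0 : 0 < θ) (h1 : θ ≤ π) :
    (∀ k : ℕ, k ≤ K → 0 ≤ (-1 : ℝ) ^ k * Real.sin ((2 * k + 1) * θ / 2)) ↔
      2 * (K : ℝ) * π / (2 * K + 1) ≤ θ := by
  have hterm (k : ℕ) :
      (-1 : ℝ) ^ k * sin ((2 * k + 1) * θ / 2) = sin (θ / 2 - k * (π - θ)) := by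
    rw [← sin_sub_nat_mul_pi]
    ring_nf
  simp only [hterm]
  rw [forall_sin_sub_nat_mul_nonneg_iff (by linarith) (by linarith) (by linarith)
    (by linarith) K, div_le_iff₀ (by positivity)]
  constructor <;> intro h <;> linarith

theorem odd_case_sign_criterion (K : ℕ) (hK : 1 ≤ K) (θ : ℝ)
    (h0 : 0 < θ) (h1 : θ ≤ π) :
    (∀ k : ℕ, k ≤ K → 0 ≤ (-1 : ℝ) ^ k * Real.sin ((2 * k + 1) * θ / 2)) ↔
      2 * (K : ℝ) * π / (2 * K + 1) ≤ θ :=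
  odd_case_sign_criterion_general K θ h0 h1
end

section
/- Let n ≥ 2 be a natural number and let ν satisfy 1 ≤ ν ≤ ⌊n/2⌋. Then ⌈n/2⌉ · (C(n−2, ν) + C(n−2, ν−2)) ≥ 2 · (⌈n/2⌉ − 1) · C(n−2, ν−1), with equality when ν = ⌊n/2⌋. Equivalently, the minimum over 1 ≤ ν ≤ ⌊n/2⌋ of the ratio (C(n−2,ν) + C(n−2,ν−2)) / (2·C(n−2,ν−1)) equals 1 − 1/⌈n/2⌉, attained at ν = ⌊n/2⌋. -/
/-!
Write `ν = k + 1` and `n = (k + 1) + (a + 1)`. Both neighbours of `C(k + a, k)` are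
rational multiples of it: `C(k + a, k + 1) = C(k + a, k) · a / (k + 1)` and
`C(k + a, k - 1) = C(k + a, k) · k / (a + 1)`. Clearing denominators leaves the polynomial
inequality `2(c - 1)(k + 1)(a + 1) ≤ c(a(a + 1) + k(k + 1))` for `c = ⌈n / 2⌉`, which is tight
exactly when `|a - k| ≤ 1`, e.g. when `ν = ⌊n / 2⌋`.
-/

section Neighbours

variable (k a : ℕ)

theorem ite_choose_pred_mul_succ :
    (if 1 ≤ k then (k + a).choose (k - 1) else 0) * (a + 1) = (k + a).choose k * k := by
  rcases k with _ | j
  · simp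
  · have h := Nat.choose_succ_right_eq (j + 1 + a) j
    rw [show j + 1 + a - j = a + 1 by omega] at h
    simpa using h.symm

theorem choose_neighbours_mul :
    ((k + a).choose (k + 1) + if 1 ≤ k then (k + a).choose (k - 1) else 0) * ((k + 1) * (a + 1)) =
      (k + a).choose k * (a * (a + 1) + k * (k + 1)) := by
  have upper := Nat.choose_succ_right_eq (k + a) k
  rw [Nat.add_sub_cancel_left] at upper
  have lower := ite_choose_pred_mul_succ k a
  calc _ = (k + a).choose (k + 1) * (k + 1) * (a + 1) +
        (if 1 ≤ k then (k + a).choose (k - 1) else 0) * (a + 1) * (k + 1) := by ring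
    _ = _ := by rw [upper, lower]; ring

/-- With `n = (k + 1) + (a + 1)` and `c = ⌈n / 2⌉`, twice the difference of the two sides is
`(2c - 1)(a - k)² - n(2c - n)`, and `a - k` has the parity of `n`. -/
theorem two_mul_ceil_half_sub_one_mul_le :
    2 * ((k + a + 2 + 1) / 2 - 1) * ((k + 1) * (a + 1)) ≤
      (k + a + 2 + 1) / 2 * (a * (a + 1) + k * (k + 1)) := by
  set c := (k + a + 2 + 1) / 2
  have hc : 1 ≤ c := by omega
  zify [hc]
  rcases Nat.even_or_odd (k + a) with heven | hodd
  · have h2c : 2 * (c : ℤ) = k + a + 2 := by have := heven.two_dvd; omega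
    nlinarith [mul_nonneg (sq_nonneg ((a : ℤ) - k)) (show (0 : ℤ) ≤ k + a + 1 by positivity)]
  · have h2c : 2 * (c : ℤ) = k + a + 3 := by have := Nat.odd_iff.mp hodd; omega
    have hne : 1 ≤ ((a : ℤ) - k) ^ 2 := by
      have : (a : ℤ) ≠ k := by intro h; have := Nat.odd_iff.mp hodd; omega
      nlinarith [sq_pos_of_ne_zero (sub_ne_zero.mpr this)]
    nlinarith [mul_nonneg (show (0 : ℤ) ≤ k + a + 2 by positivity) (sub_nonneg.mpr hne)]

theorem two_mul_ceil_half_sub_one_mul_eq (h : a = k ∨ a = k + 1) :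
    2 * ((k + a + 2 + 1) / 2 - 1) * ((k + 1) * (a + 1)) =
      (k + a + 2 + 1) / 2 * (a * (a + 1) + k * (k + 1)) := by
  rcases h with rfl | rfl
  · rw [show (a + a + 2 + 1) / 2 - 1 = a by omega, show (a + a + 2 + 1) / 2 = a + 1 by omega]
    ring
  · rw [show (k + (k + 1) + 2 + 1) / 2 - 1 = k + 1 by omega,
      show (k + (k + 1) + 2 + 1) / 2 = k + 2 by omega]
    ring

theorem two_mul_ceil_half_sub_one_mul_choose_le :
    2 * ((k + a + 2 + 1) / 2 - 1) * (k + a).choose k ≤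
      (k + a + 2 + 1) / 2 *
        ((k + a).choose (k + 1) + if 1 ≤ k then (k + a).choose (k - 1) else 0) := by
  refine Nat.le_of_mul_le_mul_right (c := (k + 1) * (a + 1)) ?_ (by positivity)
  calc _ = (k + a).choose k * (2 * ((k + a + 2 + 1) / 2 - 1) * ((k + 1) * (a + 1))) := by ring
    _ ≤ (k + a).choose k * ((k + a + 2 + 1) / 2 * (a * (a + 1) + k * (k + 1))) :=
      Nat.mul_le_mul_left _ (two_mul_ceil_half_sub_one_mul_le k a)
    _ = _ := by rw [mul_assoc, choose_neighbours_mul]; ring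

theorem two_mul_ceil_half_sub_one_mul_choose_eq (h : a = k ∨ a = k + 1) :
    2 * ((k + a + 2 + 1) / 2 - 1) * (k + a).choose k =
      (k + a + 2 + 1) / 2 *
        ((k + a).choose (k + 1) + if 1 ≤ k then (k + a).choose (k - 1) else 0) := by
  refine Nat.eq_of_mul_eq_mul_right (m := (k + 1) * (a + 1)) (by positivity) ?_
  calc _ = (k + a).choose k * (2 * ((k + a + 2 + 1) / 2 - 1) * ((k + 1) * (a + 1))) := by ring
    _ = (k + a).choose k * ((k + a + 2 + 1) / 2 * (a * (a + 1) + k * (k + 1))) := by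
      rw [two_mul_ceil_half_sub_one_mul_eq k a h]
    _ = _ := by rw [mul_assoc, choose_neighbours_mul]; ring

end Neighbours

theorem binomial_ratio_minimum_general (n ν : ℕ) (h1 : 1 ≤ ν) (h2 : ν ≤ n / 2) :
    2 * ((n + 1) / 2 - 1) * Nat.choose (n - 2) (ν - 1) ≤
      (n + 1) / 2 * (Nat.choose (n - 2) ν +
        (if 2 ≤ ν then Nat.choose (n - 2) (ν - 2) else 0)) ∧
    (ν = n / 2 →
      2 * ((n + 1) / 2 - 1) * Nat.choose (n - 2) (ν - 1) =
        (n + 1) / 2 * (Nat.choose (n - 2) ν +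
          (if 2 ≤ ν then Nat.choose (n - 2) (ν - 2) else 0))) := by
  obtain ⟨k, rfl⟩ : ∃ k, ν = k + 1 := ⟨ν - 1, by omega⟩
  obtain ⟨a, rfl⟩ : ∃ a, n = k + a + 2 := ⟨n - k - 2, by omega⟩
  simp only [Nat.reduceLeDiff, Nat.reduceSubDiff, Nat.add_sub_cancel]
  exact ⟨two_mul_ceil_half_sub_one_mul_choose_le k a,
    fun hν => two_mul_ceil_half_sub_one_mul_choose_eq k a (by omega)⟩

theorem binomial_ratio_minimum (n ν : ℕ) (hn : 2 ≤ n) (h1 : 1 ≤ ν) (h2 : ν ≤ n / 2) :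
    2 * ((n + 1) / 2 - 1) * Nat.choose (n - 2) (ν - 1) ≤
      (n + 1) / 2 * (Nat.choose (n - 2) ν +
        (if 2 ≤ ν then Nat.choose (n - 2) (ν - 2) else 0)) ∧
    (ν = n / 2 →
      2 * ((n + 1) / 2 - 1) * Nat.choose (n - 2) (ν - 1) =
        (n + 1) / 2 * (Nat.choose (n - 2) ν +
          (if 2 ≤ ν then Nat.choose (n - 2) (ν - 2) else 0))) :=
  binomial_ratio_minimum_general n ν h1 h2
end
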